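/- Let d ≥ 1 and let K ⊆ [1,∞) be bounded with 1 ∈ K. For λ > 1 set K_λ = K ∪ {λ}. Then lim_{λ→∞} λ^d · Δ_d(K_λ) = n_d(K) · Δ_d, where Δ_d = Δ_d({1}) is the unconstrained sphere packing density of ℝ^d. -/

import Mathlib

open MeasureTheory Filter Set Metric FourierTransform
open scoped ENNReal

noncomputable section

/-- `d`-dimensional Euclidean space. -/
abbrev Ed (d : ℕ) := EuclideanSpace ℝ (Fin d)

/-- The cube `t·Q_d = [-t/2, t/2]^d`. -/
def cube (d : ℕ) (t : ℝ) : Set (Ed d) := {x | ∀ i, |x i| ≤ t / 2}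

/-- The sphere packing `X + (1/2)B_d` with set of centers `X`. -/
def packing (d : ℕ) (X : Set (Ed d)) : Set (Ed d) := ⋃ x ∈ X, closedBall x 2⁻¹

/-- `X` is a set of centers of a packing of unit-diameter spheres:
distinct centers are at distance at least `1`. -/
def IsPackingCenters (d : ℕ) (X : Set (Ed d)) : Prop :=
  X.Pairwise fun x y => 1 ≤ dist x y

/-- The (upper) density of the packing with set of centers `X`:
`limsup_{t → ∞} vol(P ∩ tQ_d) / vol(tQ_d)`. -/
def dens (d : ℕ) (X : Set (Ed d)) : ℝ≥0∞ :=
  limsup (fun t : ℝ => volume (packing d X ∩ cube d t) / volume (cube d t)) atTop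

/-- `X` is the set of centers of a `K`-admissible packing: it is a packing and all
distances between centers lie in `{0} ∪ K ∪ (sup K, ∞)`. -/
def IsAdmissible (d : ℕ) (K : Set ℝ) (X : Set (Ed d)) : Prop :=
  IsPackingCenters d X ∧
    ∀ x ∈ X, ∀ y ∈ X, dist x y ∈ insert (0 : ℝ) (K ∪ Ioi (sSup K))

/-- `Δ_d(K)`: the supremum of densities of `K`-admissible sphere packings of `ℝ^d`. -/
def packingConst (d : ℕ) (K : Set ℝ) : ℝ≥0∞ :=
  ⨆ (X : Set (Ed d)) (_ : IsAdmissible d K X), dens d X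

/-- A periodic set of centers: `X = Λ + Y` for a full-rank lattice `Λ` and a
nonempty finite set `Y`. -/
def IsPeriodic (d : ℕ) (X : Set (Ed d)) : Prop :=
  ∃ (b : Module.Basis (Fin d) ℝ (Ed d)) (Y : Finset (Ed d)), Y.Nonempty ∧
    X = {x | ∃ l ∈ Submodule.span ℤ (Set.range b), ∃ y ∈ Y, x = l + y}

/-- `n_d(K)`: the maximal cardinality of a finite set in `ℝ^d` all of whose pairwise
distances lie in `K`. -/
def maxCluster (d : ℕ) (K : Set ℝ) : ℕ :=
  sSup {n : ℕ | ∃ X : Finset (Ed d),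
    (X : Set (Ed d)).Pairwise (fun x y => dist x y ∈ K) ∧ X.card = n}

/-!
The density of a packing with center set `X` is `vol(B_{1/2})` times its center density
`limsup_t #(X ∩ tQ_d) / t^d`, which does not change when the cubes are enlarged by a bounded
amount and gets multiplied by `a^{-d}` under `X ↦ a • X`. Let `ρ = sup K`.

Upper bound (`λ > 2ρ`): in a `(K ∪ {λ})`-admissible `X`, distances below `λ` lie in `K`. A maximal
`λ`-separated subset `R ⊆ X` therefore comes within `ρ` of every point of `X`, and the points of
`X` within `ρ` of one `r ∈ R` are pairwise closer than `λ`, hence form a `K`-cluster of at most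
`n_d(K)` points. So `X` has at most `n_d(K)` times the center density of `R`, and `λ⁻¹ • R` is a
packing.

Lower bound (`λ ≥ max 1 ρ`): put a copy of a largest `K`-cluster, moved within `ρ` of the origin,
at every point of `(λ + 2ρ) • X₀` for a packing `X₀`. Copies at different points are at distance
at least `λ`, so the result is `(K ∪ {λ})`-admissible with `n_d(K)` times the center density of
`(λ + 2ρ) • X₀`.

Since `(λ / (λ + 2ρ))^d → 1`, the two bounds squeeze `λ^d Δ_d(K ∪ {λ})` to `n_d(K) Δ_d`.
-/

open Topology
open scoped Pointwise

variable {d : ℕ}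

lemma mem_cube_of_dist_le {x y : Ed d} {t r : ℝ} (hx : x ∈ cube d t) (hxy : dist y x ≤ r) :
    y ∈ cube d (t + 2 * r) := fun i => by
  have hi : |y i - x i| ≤ dist y x := by simpa [Real.dist_eq] using PiLp.dist_apply_le y x i
  have := abs_sub_abs_le_abs_sub (y i) (x i)
  have := hx i
  linarith

lemma volume_cube (t : ℝ) : volume (cube d t) = ENNReal.ofReal t ^ d := by
  have hcube : cube d t = (MeasurableEquiv.toLp 2 (Fin d → ℝ)).symm ⁻¹'
      univ.pi fun _ => Icc (-(t / 2)) (t / 2) := by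
    ext x
    simp only [cube, mem_ofPred_eq, mem_preimage, MeasurableEquiv.toLp_symm_apply, Set.mem_pi,
      mem_univ, forall_const, mem_Icc, abs_le]
  rw [hcube, (EuclideanSpace.volume_preserving_symm_measurableEquiv_toLp (Fin d)).measure_preimage
    (by measurability), volume_pi_pi]
  simp [show t / 2 - -(t / 2) = t by ring]

lemma volume_cube_mul {a : ℝ} (ha : 0 ≤ a) (t : ℝ) :
    volume (cube d (a * t)) = ENNReal.ofReal a ^ d * volume (cube d t) := by
  rw [volume_cube, volume_cube, ENNReal.ofReal_mul ha, mul_pow]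

lemma smul_cube {a : ℝ} (ha : 0 < a) (t : ℝ) : a • cube d t = cube d (a * t) := by
  ext y
  rw [← smul_inv_smul₀ ha.ne' y, Set.smul_mem_smul_set_iff₀ ha.ne']
  simp only [cube, mem_ofPred_eq, PiLp.smul_apply, smul_eq_mul, abs_mul, abs_of_pos ha]
  refine forall_congr' fun i => ?_
  rw [mul_div_assoc, mul_le_mul_iff_right₀ ha]

lemma ENNReal.limsup_mul_eq_of_tendsto_one {ι : Type*} {f : Filter ι} [f.NeBot] {u v : ι → ℝ≥0∞}
    (hv : Tendsto v f (𝓝 1)) : limsup (u * v) f = limsup u f := by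
  refine le_antisymm ?_ ?_
  · simpa [hv.limsup_eq] using ENNReal.limsup_mul_le' (u := u) (v := v) (f := f)
      (.inr (by simp [hv.limsup_eq])) (.inr (by simp [hv.limsup_eq]))
  · simpa [hv.liminf_eq] using ENNReal.le_limsup_mul (u := u) (v := v) (f := f)

lemma tendsto_ofReal_add_pow_div_ofReal_add_pow (d : ℕ) (a b : ℝ) :
    Tendsto (fun t : ℝ => ENNReal.ofReal (t + a) ^ d / ENNReal.ofReal (t + b) ^ d) atTop
      (𝓝 1) := by
  have hratio : Tendsto (fun t : ℝ => (t + a) / (t + b)) atTop (𝓝 1) := by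
    have hlim : Tendsto (fun t : ℝ => 1 + (a - b) / (t + b)) atTop (𝓝 (1 + 0)) :=
      tendsto_const_nhds.add <| tendsto_const_nhds.div_atTop <|
        tendsto_atTop_add_const_right _ b tendsto_id
    rw [add_zero] at hlim
    refine hlim.congr' ?_
    filter_upwards [eventually_gt_atTop (-b)] with t ht
    rw [one_add_div (by linarith)]
    ring
  have hpow := ENNReal.tendsto_ofReal (hratio.pow d)
  rw [one_pow, ENNReal.ofReal_one] at hpow
  refine hpow.congr' ?_
  filter_upwards [eventually_gt_atTop (max (-a) (-b))] with t ht
  have ha : 0 ≤ t + a := by linarith [le_max_left (-a) (-b)]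
  have hb : 0 < t + b := by linarith [le_max_right (-a) (-b)]
  rw [div_pow, ENNReal.ofReal_div_of_pos (by positivity), ENNReal.ofReal_pow ha,
    ENNReal.ofReal_pow hb.le]

/-- `dens d X` is `cubeDensity d (fun t => volume (packing d X ∩ cube d t))`. -/
def cubeDensity (d : ℕ) (g : ℝ → ℝ≥0∞) : ℝ≥0∞ :=
  limsup (fun t => g t / volume (cube d t)) atTop

lemma cubeDensity_mono {g h : ℝ → ℝ≥0∞} (hgh : ∀ᶠ t in atTop, g t ≤ h t) :
    cubeDensity d g ≤ cubeDensity d h :=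
  limsup_le_limsup (hgh.mono fun _ ht => ENNReal.div_le_div_right ht _)

lemma cubeDensity_const_mul (g : ℝ → ℝ≥0∞) {c : ℝ≥0∞} (hc : c ≠ ∞) :
    cubeDensity d (fun t => c * g t) = c * cubeDensity d g := by
  simp_rw [cubeDensity, mul_div_assoc]
  exact ENNReal.limsup_const_mul_of_ne_top hc

lemma cubeDensity_comp_add (g : ℝ → ℝ≥0∞) (b : ℝ) :
    cubeDensity d (fun t => g (t + b)) = cubeDensity d g := by
  have hshift : limsup (fun t => g (t + b) / volume (cube d (t + b))) atTop = cubeDensity d g := by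
    have h := Filter.limsup_comp (fun t => g t / volume (cube d t)) (OrderIso.addRight b) atTop
    rw [OrderIso.map_atTop] at h
    exact h
  rw [← hshift, cubeDensity, ← ENNReal.limsup_mul_eq_of_tendsto_one
    (u := fun t => g (t + b) / volume (cube d (t + b)))
    (by simpa using tendsto_ofReal_add_pow_div_ofReal_add_pow d b 0)]
  refine limsup_congr ?_
  filter_upwards [eventually_gt_atTop (max 0 (-b))] with t ht
  have hvol_ne_zero : volume (cube d (t + b)) ≠ 0 := by
    rw [volume_cube]
    exact pow_ne_zero _ (ENNReal.ofReal_pos.mpr (by linarith [le_max_right 0 (-b)])).ne'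
  have hvol_ne_top : volume (cube d (t + b)) ≠ ∞ := by
    rw [volume_cube]
    exact ENNReal.pow_ne_top ENNReal.ofReal_ne_top
  simp only [Pi.mul_apply, ← volume_cube, div_eq_mul_inv, mul_assoc]
  rw [ENNReal.inv_mul_cancel_left hvol_ne_zero hvol_ne_top]

lemma cubeDensity_comp_mul (g : ℝ → ℝ≥0∞) {a : ℝ} (ha : 0 < a) :
    cubeDensity d (fun t => g (a * t)) = ENNReal.ofReal a ^ d * cubeDensity d g := by
  have hscale : limsup (fun t => g (a * t) / volume (cube d (a * t))) atTop = cubeDensity d g := by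
    have h := Filter.limsup_comp (fun t => g t / volume (cube d t)) (OrderIso.mulLeft₀ a ha) atTop
    rw [OrderIso.map_atTop] at h
    exact h
  rw [← hscale, ← ENNReal.limsup_const_mul_of_ne_top (by simp), cubeDensity]
  refine limsup_congr (Eventually.of_forall fun t => ?_)
  rw [volume_cube_mul ha.le, ← mul_div_assoc, ENNReal.mul_div_mul_left _ _
    (pow_ne_zero _ (ENNReal.ofReal_pos.mpr ha).ne') (ENNReal.pow_ne_top ENNReal.ofReal_ne_top)]

def ballVolume (d : ℕ) : ℝ≥0∞ := volume (ball (0 : Ed d) 2⁻¹)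

def centerDensity (d : ℕ) (X : Set (Ed d)) : ℝ≥0∞ :=
  cubeDensity d fun t => Measure.count (X ∩ cube d t)

lemma ballVolume_ne_top : ballVolume d ≠ ∞ := measure_ball_lt_top.ne

lemma ballVolume_ne_zero : ballVolume d ≠ 0 := (measure_ball_pos _ _ (by norm_num)).ne'

lemma volume_biUnion_closedBall_le (hd : 1 ≤ d) {S : Set (Ed d)} (hS : S.Countable) :
    volume (⋃ x ∈ S, closedBall x 2⁻¹) ≤ Measure.count S * ballVolume d := by
  have : Nonempty (Fin d) := ⟨⟨0, hd⟩⟩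
  refine (measure_biUnion_le volume hS _).trans_eq ?_
  simp_rw [Measure.addHaar_closedBall_eq_addHaar_ball, Measure.addHaar_ball_center]
  rw [ENNReal.tsum_const, Measure.count_apply hS.measurableSet]
  rfl

lemma count_smul_inter_cube {a : ℝ} (ha : 0 < a) (X : Set (Ed d)) (t : ℝ) :
    Measure.count (a • X ∩ cube d (a * t)) = Measure.count (X ∩ cube d t) := by
  rw [← smul_cube ha, ← Set.smul_set_inter₀ ha.ne', ← Set.image_smul,
    Measure.count_injective_image (smul_right_injective _ ha.ne')]

lemma ofReal_pow_mul_centerDensity_smul {a : ℝ} (ha : 0 < a) (X : Set (Ed d)) :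
    ENNReal.ofReal a ^ d * centerDensity d (a • X) = centerDensity d X := by
  rw [centerDensity, ← cubeDensity_comp_mul _ ha]
  simp_rw [count_smul_inter_cube ha]
  rfl

namespace IsPackingCenters

variable {X : Set (Ed d)}

lemma mono (hX : IsPackingCenters d X) {Y : Set (Ed d)} (hYX : Y ⊆ X) : IsPackingCenters d Y :=
  Set.Pairwise.mono hYX hX

lemma pairwiseDisjoint_ball (hX : IsPackingCenters d X) : X.PairwiseDisjoint (ball · 2⁻¹) :=
  fun _ hx _ hy hxy => ball_disjoint_ball (by linarith [hX hx hy hxy])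

lemma countable (hX : IsPackingCenters d X) : X.Countable :=
  hX.pairwiseDisjoint_ball.countable_of_isOpen (fun _ _ => isOpen_ball)
    (fun _ _ => nonempty_ball.2 (by norm_num))

lemma volume_biUnion_ball (hX : IsPackingCenters d X) :
    volume (⋃ x ∈ X, ball x 2⁻¹) = Measure.count X * ballVolume d := by
  rw [measure_biUnion hX.countable hX.pairwiseDisjoint_ball (fun _ _ => measurableSet_ball)]
  simp_rw [Measure.addHaar_ball_center]
  rw [ENNReal.tsum_const, Measure.count_apply hX.countable.measurableSet]
  rfl

lemma volume_packing_inter_cube_le (hd : 1 ≤ d) (hX : IsPackingCenters d X) (t : ℝ) :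
    volume (packing d X ∩ cube d t) ≤ ballVolume d * Measure.count (X ∩ cube d (t + 1)) := by
  have hsub : packing d X ∩ cube d t ⊆ ⋃ x ∈ X ∩ cube d (t + 1), closedBall x 2⁻¹ := by
    rintro z ⟨hz, hzt⟩
    obtain ⟨x, hx, hzx⟩ := mem_iUnion₂.1 hz
    refine mem_iUnion₂.2 ⟨x, ⟨hx, ?_⟩, hzx⟩
    have := mem_cube_of_dist_le hzt (dist_comm x z ▸ mem_closedBall.1 hzx)
    norm_num at this
    exact this
  calc volume (packing d X ∩ cube d t) ≤ Measure.count (X ∩ cube d (t + 1)) * ballVolume d :=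
        (measure_mono hsub).trans
          (volume_biUnion_closedBall_le hd (hX.countable.mono inter_subset_left))
    _ = _ := mul_comm _ _

lemma le_volume_packing_inter_cube (hX : IsPackingCenters d X) (t : ℝ) :
    ballVolume d * Measure.count (X ∩ cube d (t - 1)) ≤ volume (packing d X ∩ cube d t) := by
  have hsub : ⋃ x ∈ X ∩ cube d (t - 1), ball x 2⁻¹ ⊆ packing d X ∩ cube d t := by
    intro z hz
    obtain ⟨x, ⟨hx, hxt⟩, hzx⟩ := mem_iUnion₂.1 hz
    refine ⟨mem_iUnion₂.2 ⟨x, hx, ball_subset_closedBall hzx⟩, ?_⟩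
    have := mem_cube_of_dist_le hxt (mem_ball.1 hzx).le
    norm_num at this
    exact this
  calc ballVolume d * Measure.count (X ∩ cube d (t - 1))
      = volume (⋃ x ∈ X ∩ cube d (t - 1), ball x 2⁻¹) := by
        rw [(hX.mono inter_subset_left).volume_biUnion_ball, mul_comm]
    _ ≤ _ := measure_mono hsub

theorem dens_eq (hd : 1 ≤ d) (hX : IsPackingCenters d X) :
    dens d X = ballVolume d * centerDensity d X := by
  refine le_antisymm ?_ ?_
  · calc dens d X
        ≤ cubeDensity d (fun t => ballVolume d * Measure.count (X ∩ cube d (t + 1))) :=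
          cubeDensity_mono (.of_forall (hX.volume_packing_inter_cube_le hd))
      _ = ballVolume d * centerDensity d X := by
          rw [cubeDensity_const_mul _ ballVolume_ne_top,
            cubeDensity_comp_add (fun t => Measure.count (X ∩ cube d t))]
          rfl
  · calc ballVolume d * centerDensity d X
        = cubeDensity d (fun t => ballVolume d * Measure.count (X ∩ cube d (t + -1))) := by
          rw [cubeDensity_const_mul _ ballVolume_ne_top,
            cubeDensity_comp_add (fun t => Measure.count (X ∩ cube d t))]
          rfl
      _ ≤ dens d X := cubeDensity_mono (.of_forall fun t => by
          simpa only [sub_eq_add_neg] using hX.le_volume_packing_inter_cube t)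

lemma isAdmissible_one (hX : IsPackingCenters d X) : IsAdmissible d {1} X := by
  refine ⟨hX, fun x hx y hy => ?_⟩
  rcases eq_or_ne x y with rfl | hne
  · simp
  rw [csSup_singleton]
  rcases (hX hx hy hne).eq_or_lt with h | h
  · exact mem_insert_of_mem _ (.inl h.symm)
  · exact mem_insert_of_mem _ (.inr h)

lemma pairwise_le_dist_smul (hX : IsPackingCenters d X) {s : ℝ} (hs : 0 ≤ s) :
    (s • X).Pairwise fun w w' => s ≤ dist w w' := by
  rintro _ ⟨x, hx, rfl⟩ _ ⟨y, hy, rfl⟩ hne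
  rw [dist_smul₀, Real.norm_of_nonneg hs]
  exact le_mul_of_one_le_right hs (hX hx hy (by rintro rfl; exact hne rfl))

end IsPackingCenters

lemma isPackingCenters_inv_smul {R : Set (Ed d)} {a : ℝ} (ha : 0 < a)
    (hR : R.Pairwise fun x y => a ≤ dist x y) : IsPackingCenters d (a⁻¹ • R) := by
  rintro _ ⟨x, hx, rfl⟩ _ ⟨y, hy, rfl⟩ hne
  rw [dist_smul₀, Real.norm_of_nonneg (inv_nonneg.2 ha.le), ← div_eq_inv_mul, one_le_div ha]
  exact hR hx hy (by rintro rfl; exact hne rfl)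

lemma dens_le_packingConst {K : Set ℝ} {X : Set (Ed d)} (hX : IsAdmissible d K X) :
    dens d X ≤ packingConst d K :=
  le_iSup₂ (f := fun X (_ : IsAdmissible d K X) => dens d X) X hX

lemma exists_subset_pairwise_le_dist_forall_exists_dist_lt {α : Type*} [PseudoMetricSpace α]
    (s : Set α) {r : ℝ} (hr : 0 < r) :
    ∃ N ⊆ s, N.Pairwise (fun x y => r ≤ dist x y) ∧ ∀ x ∈ s, ∃ y ∈ N, dist x y < r := by
  obtain ⟨N, hN⟩ := zorn_subset {N | N ⊆ s ∧ N.Pairwise fun x y => r ≤ dist x y}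
    fun c hcS hc => ⟨⋃₀ c, ⟨sUnion_subset fun N hN => (hcS hN).1,
      (pairwise_sUnion hc.directedOn).2 fun N hN => (hcS hN).2⟩, fun _ => subset_sUnion_of_mem⟩
  refine ⟨N, hN.prop.1, hN.prop.2, fun x hx => ?_⟩
  by_contra! hfar
  have hxN : x ∈ N := hN.mem_of_prop_insert ⟨insert_subset hx hN.prop.1,
    hN.prop.2.insert fun y hy _ => ⟨hfar y hy, dist_comm x y ▸ hfar y hy⟩⟩
  exact (hfar x hxN).not_gt (by simpa using hr)

lemma count_inter_cube_le_mul_count {X R : Set (Ed d)} {ρ : ℝ} {N : ℕ} (hR : R.Countable)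
    (hcover : ∀ x ∈ X, ∃ r ∈ R, dist x r ≤ ρ)
    (hN : ∀ r ∈ R, Measure.count (X ∩ closedBall r ρ) ≤ N) (t : ℝ) :
    Measure.count (X ∩ cube d t) ≤ N * Measure.count (R ∩ cube d (t + 2 * ρ)) := by
  have hsub : X ∩ cube d t ⊆ ⋃ r ∈ R ∩ cube d (t + 2 * ρ), X ∩ closedBall r ρ := by
    rintro x ⟨hx, hxt⟩
    obtain ⟨r, hr, hxr⟩ := hcover x hx
    exact mem_iUnion₂.2 ⟨r, ⟨hr, mem_cube_of_dist_le hxt (dist_comm x r ▸ hxr)⟩, hx, hxr⟩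
  have hRt : (R ∩ cube d (t + 2 * ρ)).Countable := hR.mono inter_subset_left
  calc Measure.count (X ∩ cube d t)
      ≤ ∑' r : ↥(R ∩ cube d (t + 2 * ρ)), Measure.count (X ∩ closedBall r ρ) :=
        (measure_mono hsub).trans (measure_biUnion_le _ hRt _)
    _ ≤ ∑' _ : ↥(R ∩ cube d (t + 2 * ρ)), (N : ℝ≥0∞) := ENNReal.tsum_le_tsum fun r => hN r r.2.1
    _ = N * Measure.count (R ∩ cube d (t + 2 * ρ)) := by
        rw [ENNReal.tsum_const, Measure.count_apply hRt.measurableSet, mul_comm]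
        rfl

lemma centerDensity_le_mul_centerDensity {X R : Set (Ed d)} {ρ : ℝ} {N : ℕ} (hR : R.Countable)
    (hcover : ∀ x ∈ X, ∃ r ∈ R, dist x r ≤ ρ)
    (hN : ∀ r ∈ R, Measure.count (X ∩ closedBall r ρ) ≤ N) :
    centerDensity d X ≤ N * centerDensity d R :=
  calc centerDensity d X
      ≤ cubeDensity d (fun t => N * Measure.count (R ∩ cube d (t + 2 * ρ))) :=
        cubeDensity_mono (.of_forall (count_inter_cube_le_mul_count hR hcover hN))
    _ = N * centerDensity d R := by
        rw [cubeDensity_const_mul _ (ENNReal.natCast_ne_top N),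
          cubeDensity_comp_add (fun t => Measure.count (R ∩ cube d t))]
        rfl

lemma le_dist_add_add {E : Type*} [SeminormedAddCommGroup E] {w w' c c' : E} {s ρ : ℝ}
    (hww' : s ≤ dist w w') (hc : ‖c‖ ≤ ρ) (hc' : ‖c'‖ ≤ ρ) :
    s - 2 * ρ ≤ dist (w + c) (w' + c') := by
  have := dist_triangle4 w (w + c) (w' + c') w'
  rw [dist_self_add_right, dist_self_add_left] at this
  linarith

section Translates

variable {Y : Set (Ed d)} {C : Finset (Ed d)} {ρ : ℝ}

lemma card_mul_count_inter_cube_le (hY : Y.Countable) (hCρ : (C : Set (Ed d)) ⊆ closedBall 0 ρ)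
    (hsum : ∀ w ∈ Y, ∀ w' ∈ Y, ∀ c ∈ C, ∀ c' ∈ C, w + c = w' + c' → c = c') (t : ℝ) :
    C.card * Measure.count (Y ∩ cube d (t - 2 * ρ)) ≤
      Measure.count ((Y + (C : Set (Ed d))) ∩ cube d t) := by
  set Yt := Y ∩ cube d (t - 2 * ρ)
  have hdisj : (C : Set (Ed d)).PairwiseDisjoint fun c => (· + c) '' Yt := by
    intro c hc c' hc' hne
    refine Set.disjoint_left.2 ?_
    rintro _ ⟨w, hw, rfl⟩ ⟨w', hw', heq⟩
    exact hne (hsum w hw.1 w' hw'.1 c hc c' hc' heq.symm)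
  have hsub : ⋃ c ∈ C, (· + c) '' Yt ⊆ (Y + (C : Set (Ed d))) ∩ cube d t := by
    refine iUnion₂_subset fun c hc => ?_
    rintro _ ⟨w, ⟨hw, hwt⟩, rfl⟩
    refine ⟨Set.add_mem_add hw (Finset.mem_coe.2 hc), ?_⟩
    have := mem_cube_of_dist_le (y := w + c) (r := ρ) hwt
      (by rw [dist_self_add_left]; exact mem_closedBall_zero_iff.1 (hCρ hc))
    rwa [sub_add_cancel] at this
  calc C.card * Measure.count Yt = ∑ c ∈ C, Measure.count ((· + c) '' Yt) := by
        simp_rw [Measure.count_injective_image (add_left_injective _), Finset.sum_const,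
          nsmul_eq_mul]
    _ = Measure.count (⋃ c ∈ C, (· + c) '' Yt) :=
        (measure_biUnion_finset hdisj fun _ _ =>
          ((hY.mono inter_subset_left).image _).measurableSet).symm
    _ ≤ _ := measure_mono hsub

lemma card_mul_centerDensity_le (hY : Y.Countable) (hCρ : (C : Set (Ed d)) ⊆ closedBall 0 ρ)
    (hsum : ∀ w ∈ Y, ∀ w' ∈ Y, ∀ c ∈ C, ∀ c' ∈ C, w + c = w' + c' → c = c') :
    C.card * centerDensity d Y ≤ centerDensity d (Y + (C : Set (Ed d))) :=
  calc C.card * centerDensity d Y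
      = cubeDensity d (fun t => C.card * Measure.count (Y ∩ cube d (t + -(2 * ρ)))) := by
        rw [cubeDensity_const_mul _ (ENNReal.natCast_ne_top _),
          cubeDensity_comp_add (fun t => Measure.count (Y ∩ cube d t))]
        rfl
    _ ≤ centerDensity d (Y + (C : Set (Ed d))) := cubeDensity_mono (.of_forall fun t => by
        simpa only [sub_eq_add_neg] using card_mul_count_inter_cube_le hY hCρ hsum t)

end Translates

lemma subset_closedBall_of_pairwise_dist_mem {α : Type*} [PseudoMetricSpace α] {K : Set ℝ}
    (hKbdd : BddAbove K) (hK : 0 ≤ sSup K) {S : Set α}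
    (hS : S.Pairwise fun x y => dist x y ∈ K) {x : α} (hx : x ∈ S) : S ⊆ closedBall x (sSup K) := by
  intro y hy
  rcases eq_or_ne y x with rfl | hne
  · exact mem_closedBall_self hK
  · exact le_csSup hKbdd (hS hy hx hne)

section Clusters

variable {K : Set ℝ}

lemma sSup_nonneg_of_subset_Ici_one (hKsub : K ⊆ Ici 1) : 0 ≤ sSup K :=
  Real.sSup_nonneg fun _ hx => zero_le_one.trans (hKsub hx)

lemma bddAbove_clusterCards (hKsub : K ⊆ Ici 1) (hKbdd : BddAbove K) :
    BddAbove {n : ℕ | ∃ X : Finset (Ed d),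
      (X : Set (Ed d)).Pairwise (fun x y => dist x y ∈ K) ∧ X.card = n} := by
  set ρ := sSup K
  obtain ⟨N, hN⟩ := ENNReal.exists_nat_gt
    (ENNReal.div_lt_top (measure_ball_lt_top (μ := volume) (x := (0 : Ed d)) (r := ρ + 2⁻¹)).ne
      ballVolume_ne_zero).ne
  refine ⟨N, ?_⟩
  rintro _ ⟨C, hC, rfl⟩
  rcases C.eq_empty_or_nonempty with rfl | ⟨x, hx⟩
  · simp
  have hCρ := subset_closedBall_of_pairwise_dist_mem hKbdd (sSup_nonneg_of_subset_Ici_one hKsub)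
    hC (Finset.mem_coe.2 hx)
  have hCpack : IsPackingCenters d C := fun _ hy _ hz hyz => hKsub (hC hy hz hyz)
  have hballs : ⋃ y ∈ (C : Set (Ed d)), ball y 2⁻¹ ⊆ ball x (ρ + 2⁻¹) := by
    refine iUnion₂_subset fun y hy z hz => ?_
    have := dist_triangle z y x
    have := mem_closedBall.1 (hCρ hy)
    have := mem_ball.1 hz
    exact mem_ball.2 (by linarith)
  have hvol : (C.card : ℝ≥0∞) * ballVolume d ≤ volume (ball (0 : Ed d) (ρ + 2⁻¹)) := by
    rw [← Measure.count_apply_finset, ← hCpack.volume_biUnion_ball,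
      ← Measure.addHaar_ball_center volume x]
    exact measure_mono hballs
  rw [← ENNReal.le_div_iff_mul_le (.inl ballVolume_ne_zero) (.inl ballVolume_ne_top)] at hvol
  exact_mod_cast (hvol.trans_lt hN).le

lemma card_le_maxCluster (hKsub : K ⊆ Ici 1) (hKbdd : BddAbove K) {C : Finset (Ed d)}
    (hC : (C : Set (Ed d)).Pairwise fun x y => dist x y ∈ K) : C.card ≤ maxCluster d K :=
  le_csSup (bddAbove_clusterCards hKsub hKbdd) ⟨C, hC, rfl⟩

lemma count_le_maxCluster (hKsub : K ⊆ Ici 1) (hKbdd : BddAbove K) {S : Set (Ed d)}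
    (hS : S.Pairwise fun x y => dist x y ∈ K) : Measure.count S ≤ maxCluster d K := by
  have hfin : S.Finite := by
    by_contra hinf
    obtain ⟨C, hCS, hCcard⟩ := Set.Infinite.exists_subset_card_eq hinf (maxCluster d K + 1)
    have := card_le_maxCluster hKsub hKbdd (hS.mono hCS)
    omega
  rw [Measure.count_apply_finite _ hfin]
  exact_mod_cast card_le_maxCluster hKsub hKbdd (by rwa [hfin.coe_toFinset])

lemma exists_cluster_card_eq_maxCluster (hKsub : K ⊆ Ici 1) (hKbdd : BddAbove K) :
    ∃ C : Finset (Ed d), (C : Set (Ed d)).Pairwise (fun x y => dist x y ∈ K) ∧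
      C.card = maxCluster d K ∧ (C : Set (Ed d)) ⊆ closedBall 0 (sSup K) := by
  obtain ⟨C₀, hC₀, hcard⟩ : maxCluster d K ∈ {n : ℕ | ∃ X : Finset (Ed d),
      (X : Set (Ed d)).Pairwise (fun x y => dist x y ∈ K) ∧ X.card = n} :=
    Nat.sSup_mem ⟨0, ∅, by simp, rfl⟩ (bddAbove_clusterCards hKsub hKbdd)
  rcases C₀.eq_empty_or_nonempty with rfl | ⟨c₀, hc₀⟩
  · exact ⟨∅, by simp, hcard, by simp⟩
  have hC₀ρ := subset_closedBall_of_pairwise_dist_mem hKbdd (sSup_nonneg_of_subset_Ici_one hKsub)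
    hC₀ (Finset.mem_coe.2 hc₀)
  refine ⟨C₀.image (· - c₀), ?_, ?_, ?_⟩
  · rw [Finset.coe_image]
    rintro _ ⟨a, ha, rfl⟩ _ ⟨b, hb, rfl⟩ hne
    rw [dist_sub_right]
    exact hC₀ ha hb (by rintro rfl; exact hne rfl)
  · rw [Finset.card_image_of_injective _ (sub_left_injective), hcard]
  · rw [Finset.coe_image]
    rintro _ ⟨a, ha, rfl⟩
    rw [mem_closedBall_zero_iff, ← dist_eq_norm]
    exact hC₀ρ ha

end Clusters

section FarDistance

variable {K : Set ℝ} {lam : ℝ}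

lemma sSup_union_singleton_of_le (hK : K.Nonempty) (hKbdd : BddAbove K) (hlam : sSup K ≤ lam) :
    sSup (K ∪ {lam}) = lam := by
  rw [union_singleton, csSup_insert hKbdd hK, sup_eq_left.2 hlam]

lemma IsAdmissible.dist_mem_of_dist_lt (hK : K.Nonempty) (hKbdd : BddAbove K)
    (hlam : sSup K ≤ lam) {X : Set (Ed d)} (hX : IsAdmissible d (K ∪ {lam}) X) {x y : Ed d}
    (hx : x ∈ X) (hy : y ∈ X) (hxy : x ≠ y) (hlt : dist x y < lam) : dist x y ∈ K := by
  have := hX.2 x hx y hy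
  rw [sSup_union_singleton_of_le hK hKbdd hlam] at this
  rcases this with h0 | (hK | hlam') | hgt
  · exact absurd (dist_eq_zero.1 h0) hxy
  · exact hK
  · exact absurd (mem_singleton_iff.1 hlam') hlt.ne
  · exact absurd (mem_Ioi.1 hgt) hlt.not_gt

theorem ofReal_pow_mul_dens_le (hd : 1 ≤ d) (hK1 : (1 : ℝ) ∈ K) (hKsub : K ⊆ Ici 1)
    (hKbdd : BddAbove K) (hlam : 2 * sSup K < lam) {X : Set (Ed d)}
    (hX : IsAdmissible d (K ∪ {lam}) X) :
    ENNReal.ofReal lam ^ d * dens d X ≤ maxCluster d K * packingConst d {1} := by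
  set ρ := sSup K
  have hρ : 0 ≤ ρ := sSup_nonneg_of_subset_Ici_one hKsub
  have hlam0 : 0 < lam := by linarith
  have hnear : ∀ {x y}, x ∈ X → y ∈ X → x ≠ y → dist x y < lam → dist x y ∈ K :=
    hX.dist_mem_of_dist_lt ⟨1, hK1⟩ hKbdd (by linarith)
  obtain ⟨R, hRX, hRsep, hRnear⟩ := exists_subset_pairwise_le_dist_forall_exists_dist_lt X hlam0
  have hcover : ∀ x ∈ X, ∃ r ∈ R, dist x r ≤ ρ := by
    intro x hx
    obtain ⟨r, hr, hxr⟩ := hRnear x hx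
    refine ⟨r, hr, ?_⟩
    rcases eq_or_ne x r with rfl | hne
    · simpa using hρ
    · exact le_csSup hKbdd (hnear hx (hRX hr) hne hxr)
  have hcluster : ∀ r ∈ R, Measure.count (X ∩ closedBall r ρ) ≤ maxCluster d K := by
    refine fun r _ => count_le_maxCluster hKsub hKbdd fun x hx y hy hxy => hnear hx.1 hy.1 hxy ?_
    have := dist_triangle_right x y r
    have := mem_closedBall.1 hx.2
    have := mem_closedBall.1 hy.2
    linarith
  have hRpack : IsPackingCenters d (lam⁻¹ • R) := isPackingCenters_inv_smul hlam0 hRsep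
  calc ENNReal.ofReal lam ^ d * dens d X
      = ballVolume d * (ENNReal.ofReal lam ^ d * centerDensity d X) := by
        rw [hX.1.dens_eq hd]
        ring
    _ ≤ ballVolume d * (ENNReal.ofReal lam ^ d * (maxCluster d K * centerDensity d R)) := by
        gcongr
        exact centerDensity_le_mul_centerDensity (hX.1.mono hRX).countable hcover hcluster
    _ = maxCluster d K *
          (ballVolume d * (ENNReal.ofReal lam ^ d * centerDensity d (lam • lam⁻¹ • R))) := by
        rw [smul_inv_smul₀ hlam0.ne']
        ring
    _ = maxCluster d K * dens d (lam⁻¹ • R) := by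
        rw [ofReal_pow_mul_centerDensity_smul hlam0, hRpack.dens_eq hd]
    _ ≤ maxCluster d K * packingConst d {1} := by
        gcongr
        exact dens_le_packingConst hRpack.isAdmissible_one

theorem ofReal_pow_mul_packingConst_le (hd : 1 ≤ d) (hK1 : (1 : ℝ) ∈ K) (hKsub : K ⊆ Ici 1)
    (hKbdd : BddAbove K) (hlam : 2 * sSup K < lam) :
    ENNReal.ofReal lam ^ d * packingConst d (K ∪ {lam}) ≤ maxCluster d K * packingConst d {1} := by
  rw [packingConst, ENNReal.mul_iSup]
  refine iSup_le fun X => ?_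
  rw [ENNReal.mul_iSup]
  exact iSup_le (ofReal_pow_mul_dens_le hd hK1 hKsub hKbdd hlam)

lemma isAdmissible_add_cluster (hK1 : (1 : ℝ) ∈ K) (hKsub : K ⊆ Ici 1) (hKbdd : BddAbove K)
    (hlam1 : 1 ≤ lam) (hKlam : sSup K ≤ lam) {Y : Set (Ed d)} {C : Finset (Ed d)}
    (hY : Y.Pairwise fun w w' => lam + 2 * sSup K ≤ dist w w')
    (hC : (C : Set (Ed d)).Pairwise fun x y => dist x y ∈ K)
    (hCρ : (C : Set (Ed d)) ⊆ closedBall 0 (sSup K)) :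
    IsAdmissible d (K ∪ {lam}) (Y + (C : Set (Ed d))) := by
  have hdist : ∀ z ∈ Y + (C : Set (Ed d)), ∀ z' ∈ Y + (C : Set (Ed d)), z ≠ z' →
      dist z z' ∈ K ∨ lam ≤ dist z z' := by
    rintro _ ⟨w, hw, c, hc, rfl⟩ _ ⟨w', hw', c', hc', rfl⟩ hne
    rcases eq_or_ne w w' with rfl | hww'
    · left
      rw [dist_add_left]
      exact hC hc hc' (by rintro rfl; exact hne rfl)
    · right
      have := le_dist_add_add (hY hw hw' hww') (mem_closedBall_zero_iff.1 (hCρ hc))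
        (mem_closedBall_zero_iff.1 (hCρ hc'))
      linarith
  refine ⟨fun z hz z' hz' hne => ?_, fun z hz z' hz' => ?_⟩
  · rcases hdist z hz z' hz' hne with h | h
    · exact hKsub h
    · linarith
  rcases eq_or_ne z z' with rfl | hne
  · simp
  rw [sSup_union_singleton_of_le ⟨1, hK1⟩ hKbdd hKlam]
  rcases hdist z hz z' hz' hne with h | h
  · exact mem_insert_of_mem _ (.inl (.inl h))
  rcases h.eq_or_lt with h | h
  · exact mem_insert_of_mem _ (.inl (.inr h.symm))
  · exact mem_insert_of_mem _ (.inr h)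

theorem maxCluster_mul_dens_le (hd : 1 ≤ d) (hK1 : (1 : ℝ) ∈ K) (hKsub : K ⊆ Ici 1)
    (hKbdd : BddAbove K) (hlam1 : 1 ≤ lam) (hKlam : sSup K ≤ lam) {X₀ : Set (Ed d)}
    (hX₀ : IsPackingCenters d X₀) :
    maxCluster d K * dens d X₀ ≤
      ENNReal.ofReal (lam + 2 * sSup K) ^ d * packingConst d (K ∪ {lam}) := by
  set ρ := sSup K
  have hs : 0 < lam + 2 * ρ := by linarith [sSup_nonneg_of_subset_Ici_one hKsub]
  obtain ⟨C, hC, hCcard, hCρ⟩ := exists_cluster_card_eq_maxCluster (d := d) hKsub hKbdd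
  set Y := (lam + 2 * ρ) • X₀
  have hY := hX₀.pairwise_le_dist_smul hs.le
  have hYcount : Y.Countable := hX₀.countable.image _
  have hadm := isAdmissible_add_cluster hK1 hKsub hKbdd hlam1 hKlam hY hC hCρ
  have hsum : ∀ w ∈ Y, ∀ w' ∈ Y, ∀ c ∈ C, ∀ c' ∈ C, w + c = w' + c' → c = c' := by
    intro w hw w' hw' c hc c' hc' heq
    rcases eq_or_ne w w' with rfl | hne
    · exact add_left_cancel heq
    · have := le_dist_add_add (hY hw hw' hne) (mem_closedBall_zero_iff.1 (hCρ hc))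
        (mem_closedBall_zero_iff.1 (hCρ hc'))
      rw [heq, dist_self] at this
      linarith
  calc maxCluster d K * dens d X₀
      = ENNReal.ofReal (lam + 2 * ρ) ^ d * (ballVolume d * (C.card * centerDensity d Y)) := by
        rw [hX₀.dens_eq hd, ← ofReal_pow_mul_centerDensity_smul hs, hCcard]
        ring
    _ ≤ ENNReal.ofReal (lam + 2 * ρ) ^ d *
          (ballVolume d * centerDensity d (Y + (C : Set (Ed d)))) := by
        gcongr
        exact card_mul_centerDensity_le hYcount hCρ hsum
    _ = ENNReal.ofReal (lam + 2 * ρ) ^ d * dens d (Y + (C : Set (Ed d))) := by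
        rw [hadm.1.dens_eq hd]
    _ ≤ ENNReal.ofReal (lam + 2 * ρ) ^ d * packingConst d (K ∪ {lam}) := by
        gcongr
        exact dens_le_packingConst hadm

theorem maxCluster_mul_packingConst_le (hd : 1 ≤ d) (hK1 : (1 : ℝ) ∈ K) (hKsub : K ⊆ Ici 1)
    (hKbdd : BddAbove K) (hlam1 : 1 ≤ lam) (hKlam : sSup K ≤ lam) :
    maxCluster d K * packingConst d {1} ≤
      ENNReal.ofReal (lam + 2 * sSup K) ^ d * packingConst d (K ∪ {lam}) := by
  rw [packingConst, ENNReal.mul_iSup]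
  refine iSup_le fun X₀ => ?_
  rw [ENNReal.mul_iSup]
  exact iSup_le fun hX₀ => maxCluster_mul_dens_le hd hK1 hKsub hKbdd hlam1 hKlam hX₀.1

end FarDistance

/-- Proposition `prop:limitcase`: `lim_{λ→∞} λ^d Δ_d(K ∪ {λ}) = n_d(K) Δ_d`. -/
theorem limit_packing_const_with_far_distance
    (d : ℕ) (hd : 1 ≤ d)
    (K : Set ℝ) (hK1 : (1 : ℝ) ∈ K) (hKsub : K ⊆ Ici 1) (hKbdd : BddAbove K) :
    Tendsto (fun lam : ℝ => ENNReal.ofReal (lam ^ d) * packingConst d (K ∪ {lam}))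
      atTop (nhds ((maxCluster d K : ℝ≥0∞) * packingConst d {1})) := by
  set ρ := sSup K
  have hρ : 0 ≤ ρ := sSup_nonneg_of_subset_Ici_one hKsub
  refine tendsto_of_le_liminf_of_limsup_le ?_ ?_
  · have hratio : Tendsto (fun lam : ℝ => ENNReal.ofReal lam ^ d /
        ENNReal.ofReal (lam + 2 * ρ) ^ d * (maxCluster d K * packingConst d {1})) atTop
        (𝓝 (maxCluster d K * packingConst d {1})) := by
      simpa using ENNReal.Tendsto.mul_const
        (tendsto_ofReal_add_pow_div_ofReal_add_pow d 0 (2 * ρ)) (.inl one_ne_zero)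
    refine hratio.liminf_eq.ge.trans (liminf_le_liminf ?_)
    filter_upwards [eventually_ge_atTop 1, eventually_ge_atTop ρ] with lam hlam1 hKlam
    have hs : 0 < lam + 2 * ρ := by linarith
    calc _ ≤ ENNReal.ofReal lam ^ d / ENNReal.ofReal (lam + 2 * ρ) ^ d *
          (ENNReal.ofReal (lam + 2 * ρ) ^ d * packingConst d (K ∪ {lam})) := by
          gcongr _ * ?_
          exact maxCluster_mul_packingConst_le hd hK1 hKsub hKbdd hlam1 hKlam
      _ = ENNReal.ofReal (lam ^ d) * packingConst d (K ∪ {lam}) := by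
          rw [← mul_assoc, ENNReal.div_mul_cancel (pow_ne_zero _ (ENNReal.ofReal_pos.2 hs).ne')
            (ENNReal.pow_ne_top ENNReal.ofReal_ne_top), ENNReal.ofReal_pow (by linarith)]
  · refine limsup_le_of_le (h := ?_)
    filter_upwards [eventually_gt_atTop (2 * ρ)] with lam hlam
    rw [ENNReal.ofReal_pow (by linarith)]
    exact ofReal_pow_mul_packingConst_le hd hK1 hKsub hKbdd hlam
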